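/- arXiv:1112.4875 — 2 statements merged into one kernel-verified Lean document; each statement's English description precedes it below -/
import Mathlib

section
/- Let p, q, r ∈ (1,∞) satisfy 1/p + 1/q + 1/r = 2, and let d ≥ 1. There exist C < ∞ and γ > 0, depending only on (p,q,r), such that for any measurable sets E, E' ⊂ ℝ^d with positive and finite Lebesgue measures, ‖1_E * 1_{E'}‖_{r'} ≤ C · min(|E|/|E'|, |E'|/|E|)^γ · |E|^{1/p} |E'|^{1/q}, where r' = r/(r−1). -/
/-!
For indicators, `f = 1_E * 1_{E'}` is `f x = |(x - E) ∩ E'|`, so `0 ≤ f ≤ min (|E|, |E'|)`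
and, by Fubini and translation invariance, `‖f‖₁ = |E| |E'|`. Interpolating between `L¹` and
`L^∞` gives `‖f‖_{r'} ≤ min (|E|, |E'|) ^ (1/r) (|E| |E'|) ^ (1/r')`, and as
`1/r' = 1/p + 1/q - 1` this is at most `min (|E|/|E'|, |E'|/|E|) ^ γ |E| ^ (1/p) |E'| ^ (1/q)`
with `C = 1`, `γ = min (1/p', 1/q')`.
-/

open MeasureTheory Filter Metric Set
noncomputable section

/-- ℝ^d as Euclidean space. -/
abbrev Ed (d : ℕ) := EuclideanSpace ℝ (Fin d)

/-- Convolution of real-valued functions on ℝ^d. -/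
def conv {d : ℕ} (f g : Ed d → ℝ) : Ed d → ℝ := fun x => ∫ y, f (x - y) * g y

/-- The L^s(ℝ^d) norm (real-valued). -/
def nrm {d : ℕ} (s : ℝ) (f : Ed d → ℝ) : ℝ := (eLpNorm f (ENNReal.ofReal s) volume).toReal

open scoped ENNReal

theorem eLpNorm_le_rpow_mul_eLpNorm_one_rpow {α ε : Type*} [MeasurableSpace α]
    [ENorm ε] {μ : Measure α} {f : α → ε} {M : ℝ≥0∞} {s : ℝ} (hs : 1 ≤ s)
    (hM : M ≠ ∞) (hf : ∀ᵐ x ∂μ, ‖f x‖ₑ ≤ M) :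
    eLpNorm f (ENNReal.ofReal s) μ ≤ M ^ (1 - 1 / s) * eLpNorm f 1 μ ^ (1 / s) := by
  have hs0 : 0 < s := by linarith
  have hpow : ∀ᵐ x ∂μ, ‖f x‖ₑ ^ s ≤ M ^ (s - 1) * ‖f x‖ₑ := by
    filter_upwards [hf] with x hx
    calc ‖f x‖ₑ ^ s = ‖f x‖ₑ ^ (s - 1) * ‖f x‖ₑ ^ (1 : ℝ) := by
          rw [← ENNReal.rpow_add_of_nonneg _ _ (by linarith) zero_le_one, sub_add_cancel]
      _ ≤ M ^ (s - 1) * ‖f x‖ₑ := by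
          rw [ENNReal.rpow_one]; gcongr
  calc eLpNorm f (ENNReal.ofReal s) μ = (∫⁻ x, ‖f x‖ₑ ^ s ∂μ) ^ (1 / s) := by
        rw [eLpNorm_eq_lintegral_rpow_enorm_toReal (by simpa using hs0) ENNReal.ofReal_ne_top,
          ENNReal.toReal_ofReal hs0.le]
    _ ≤ (M ^ (s - 1) * ∫⁻ x, ‖f x‖ₑ ∂μ) ^ (1 / s) := by
        gcongr
        exact (lintegral_mono_ae hpow).trans_eq (lintegral_const_mul' _ _ (by finiteness))
    _ = M ^ (1 - 1 / s) * eLpNorm f 1 μ ^ (1 / s) := by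
        rw [ENNReal.mul_rpow_of_nonneg _ _ (by positivity), ← ENNReal.rpow_mul,
          eLpNorm_one_eq_lintegral_enorm]
        congr 2
        field_simp

section SubPreimage

variable {G : Type*} [AddGroup G] [MeasurableSpace G] [MeasurableAdd₂ G] [MeasurableNeg G]
  (μ : Measure G) {E E' : Set G}

theorem measure_preimage_sub_left [μ.IsNegInvariant] [μ.IsAddLeftInvariant] (hE : MeasurableSet E)
    (x : G) : μ ((x - ·) ⁻¹' E) = μ E :=
  (Measure.measurePreserving_sub_left μ x).measure_preimage hE.nullMeasurableSet

theorem lintegral_measure_sub_preimage_inter [SFinite μ] [μ.IsAddRightInvariant]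
    (hE : MeasurableSet E) (hE' : MeasurableSet E') :
    ∫⁻ x, μ ((x - ·) ⁻¹' E ∩ E') ∂μ = μ E * μ E' := by
  have hS : MeasurableSet ((fun z : G × G => (z.1 - z.2, z.2)) ⁻¹' E ×ˢ E') :=
    (measurable_fst.sub measurable_snd).prodMk measurable_snd (hE.prod hE')
  rw [← Measure.prod_prod, ← (measurePreserving_sub_prod μ μ).measure_preimage
    (hE.prod hE').nullMeasurableSet, Measure.prod_apply hS]
  rfl

end SubPreimage

section ConvIndicator

variable {d : ℕ} {E E' : Set (Ed d)}

theorem conv_indicator_one_apply (hE : MeasurableSet E) (hE' : MeasurableSet E') (x : Ed d) :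
    conv (E.indicator 1) (E'.indicator 1) x = volume.real ((x - ·) ⁻¹' E ∩ E') := by
  have hS : MeasurableSet ((x - ·) ⁻¹' E ∩ E') := (measurable_const_sub x hE).inter hE'
  rw [← integral_indicator_one hS, inter_indicator_one]
  rfl

theorem enorm_conv_indicator_one (hE : MeasurableSet E) (hE' : MeasurableSet E')
    (hE'_fin : volume E' ≠ ∞) (x : Ed d) :
    ‖conv (E.indicator 1) (E'.indicator 1) x‖ₑ = volume ((x - ·) ⁻¹' E ∩ E') := by
  rw [conv_indicator_one_apply hE hE', Real.enorm_of_nonneg measureReal_nonneg,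
    ofReal_measureReal (measure_ne_top_of_subset inter_subset_right hE'_fin)]

theorem eLpNorm_conv_indicator_one_le (hE : MeasurableSet E) (hE' : MeasurableSet E')
    (hE_fin : volume E ≠ ∞) (hE'_fin : volume E' ≠ ∞) {s : ℝ} (hs : 1 ≤ s) :
    eLpNorm (conv (E.indicator 1) (E'.indicator 1)) (ENNReal.ofReal s) volume ≤
      min (volume E) (volume E') ^ (1 - 1 / s) * (volume E * volume E') ^ (1 / s) := by
  have hsup : ∀ x,
      ‖conv (E.indicator 1) (E'.indicator 1) x‖ₑ ≤ min (volume E) (volume E') := by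
    intro x
    rw [enorm_conv_indicator_one hE hE' hE'_fin]
    exact le_min (measure_preimage_sub_left volume hE x ▸ measure_mono inter_subset_left)
      (measure_mono inter_subset_right)
  have hL1 : eLpNorm (conv (E.indicator 1) (E'.indicator 1)) 1 volume = volume E * volume E' := by
    simp_rw [eLpNorm_one_eq_lintegral_enorm, enorm_conv_indicator_one hE hE' hE'_fin]
    exact lintegral_measure_sub_preimage_inter volume hE hE'
  exact hL1 ▸ eLpNorm_le_rpow_mul_eLpNorm_one_rpow hs (by simp [hE_fin])
    (.of_forall hsup)

theorem nrm_conv_indicator_one_le (hE : MeasurableSet E) (hE' : MeasurableSet E')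
    (hE_fin : volume E ≠ ∞) (hE'_fin : volume E' ≠ ∞) {s : ℝ} (hs : 1 ≤ s) :
    nrm s (conv (E.indicator 1) (E'.indicator 1)) ≤
      min (volume E).toReal (volume E').toReal ^ (1 - 1 / s) *
        ((volume E).toReal * (volume E').toReal) ^ (1 / s) := by
  have hs_inv : 1 / s ≤ 1 := (div_le_one (by linarith)).2 hs
  have hfin : min (volume E) (volume E') ^ (1 - 1 / s) * (volume E * volume E') ^ (1 / s) ≠ ∞ :=
    ENNReal.mul_ne_top
      (ENNReal.rpow_ne_top_of_nonneg (by linarith) (min_le_left _ _ |>.trans_lt hE_fin.lt_top).ne)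
      (ENNReal.rpow_ne_top_of_nonneg (by positivity) (ENNReal.mul_ne_top hE_fin hE'_fin))
  have h := ENNReal.toReal_mono hfin (eLpNorm_conv_indicator_one_le hE hE' hE_fin hE'_fin hs)
  rwa [ENNReal.toReal_mul, ← ENNReal.toReal_rpow, ← ENNReal.toReal_rpow, ENNReal.toReal_mul,
    ENNReal.toReal_min hE_fin hE'_fin] at h

end ConvIndicator

theorem mul_rpow_le_div_rpow_mul_rpow_mul_rpow {a b α β γ : ℝ} (ha : 0 < a) (hab : a ≤ b)
    (hγ : γ ≤ 1 - α) :
    a * b ^ (α + β - 1) ≤ (a / b) ^ γ * a ^ α * b ^ β := by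
  have hb : 0 < b := ha.trans_le hab
  have hdiv : a / b ≤ 1 := (div_le_one hb).2 hab
  calc a * b ^ (α + β - 1) = (a / b) ^ (1 - α) * a ^ α * b ^ β := by
        rw [Real.div_rpow ha.le hb.le, Real.rpow_sub hb, Real.rpow_add hb, Real.rpow_sub ha,
          Real.rpow_sub hb, Real.rpow_one, Real.rpow_one]
        field_simp
    _ ≤ (a / b) ^ γ * a ^ α * b ^ β := by
        gcongr ?_ * _ * _
        exact Real.rpow_le_rpow_of_exponent_ge (by positivity) hdiv hγ

theorem min_rpow_mul_mul_rpow_le {a b : ℝ} (α β : ℝ) (ha : 0 < a) (hb : 0 < b) :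
    min a b ^ (2 - α - β) * (a * b) ^ (α + β - 1) ≤
      min (a / b) (b / a) ^ min (1 - α) (1 - β) * a ^ α * b ^ β := by
  wlog hab : a ≤ b generalizing a b α β
  · have := this β α hb ha (le_of_not_ge hab)
    rw [min_comm b, min_comm (b / a), min_comm (1 - β), mul_comm b] at this
    convert this using 1 <;> ring_nf
  have hmin : min (a / b) (b / a) = a / b :=
    min_eq_left ((div_le_one (ha.trans_le hab)).2 hab |>.trans ((one_le_div ha).2 hab))
  rw [min_eq_left hab, hmin, Real.mul_rpow ha.le hb.le, ← mul_assoc, ← Real.rpow_add ha,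
    show 2 - α - β + (α + β - 1) = 1 by ring, Real.rpow_one]
  exact mul_rpow_le_div_rpow_mul_rpow_mul_rpow ha hab (min_le_left _ _)

theorem conv_indicator_bound_general (p q r : ℝ) (hp : 1 < p) (hq : 1 < q) (hr : 1 < r)
    (hpqr : 1/p + 1/q + 1/r = 2) (d : ℕ) :
    ∃ C γ : ℝ, 0 < γ ∧
      ∀ E E' : Set (Ed d), MeasurableSet E → MeasurableSet E' →
        0 < volume E → volume E ≠ ⊤ → 0 < volume E' → volume E' ≠ ⊤ →
        nrm (r/(r-1)) (conv (E.indicator 1) (E'.indicator 1)) ≤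
          C * (min ((volume E).toReal / (volume E').toReal)
                   ((volume E').toReal / (volume E).toReal)) ^ γ
            * (volume E).toReal ^ (1/p) * (volume E').toReal ^ (1/q) := by
  refine ⟨1, min (1 - 1/p) (1 - 1/q), lt_min ?_ ?_, ?_⟩
  · simpa using inv_lt_one_of_one_lt₀ hp
  · simpa using inv_lt_one_of_one_lt₀ hq
  intro E E' hE hE' hE_pos hE_fin hE'_pos hE'_fin
  have hs : 1 ≤ r / (r - 1) := by rw [le_div_iff₀ (by linarith)]; linarith
  have hs_inv : 1 / (r / (r - 1)) = 1/p + 1/q - 1 := by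
    rw [one_div_div, sub_div, div_self (by positivity)]; linarith
  have h := nrm_conv_indicator_one_le hE hE' hE_fin hE'_fin hs
  rw [hs_inv, show 1 - (1/p + 1/q - 1) = 2 - 1/p - 1/q by ring] at h
  rw [one_mul]
  exact h.trans (min_rpow_mul_mul_rpow_le _ _ (ENNReal.toReal_pos hE_pos.ne' hE_fin)
    (ENNReal.toReal_pos hE'_pos.ne' hE'_fin))

theorem conv_indicator_bound (p q r : ℝ) (hp : 1 < p) (hq : 1 < q) (hr : 1 < r)
    (hpqr : 1/p + 1/q + 1/r = 2) (d : ℕ) (hd : 1 ≤ d) :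
    ∃ C γ : ℝ, 0 < γ ∧
      ∀ E E' : Set (Ed d), MeasurableSet E → MeasurableSet E' →
        0 < volume E → volume E ≠ ⊤ → 0 < volume E' → volume E' ≠ ⊤ →
        nrm (r/(r-1)) (conv (E.indicator 1) (E'.indicator 1)) ≤
          C * (min ((volume E).toReal / (volume E').toReal)
                   ((volume E').toReal / (volume E).toReal)) ^ γ
            * (volume E).toReal ^ (1/p) * (volume E').toReal ^ (1/q) :=
  conv_indicator_bound_general p q r hp hq hr hpqr d
end
end

section
/- Let p, q, r ∈ (1,∞) satisfy 1/p + 1/q + 1/r = 2, let d ≥ 1, and let 0 < γ ≤ Γ < ∞. Let (f_ν, g_ν, h_ν) be a normalized extremizing sequence of triples of nonnegative functions in (L^p × L^q × L^r)(ℝ^d) with ‖f_ν‖_p = ‖g_ν‖_q = ‖h_ν‖_r = 1, and suppose that for every ν the values of the rearrangements on the unit sphere satisfy f_ν^⋆(x), g_ν^⋆(x), h_ν^⋆(x) ∈ [γ, Γ] for |x| = 1. Then the sequence (f_ν^⋆) is precompact in L^p(ℝ^d), and likewise (g_ν^⋆), (h_ν^⋆) are precompact in L^q(ℝ^d), L^r(ℝ^d)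 respectively. -/
open MeasureTheory Filter Metric Set
noncomputable section

/-- The pairing ⟨u,v⟩ = ∫ u v. -/
def pairing {d : ℕ} (u v : Ed d → ℝ) : ℝ := ∫ x, u x * v x

/-- C_s = (s^{1/s}/(s')^{1/s'})^{1/2} where s' = s/(s-1). -/
def Cst (s : ℝ) : ℝ := Real.sqrt ((s ^ (1/s)) / ((s/(s-1)) ^ (1/(s/(s-1)))))

/-- The sharp Young constant A_{p,q,r} = C_p C_q C_r. -/
def Apqr (p q r : ℝ) : ℝ := Cst p * Cst q * Cst r

/-- f is η-normalized with exponent p with respect to Θ, R. -/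
def IsNormalized {d : ℕ} (Θ Rf : ℝ → ℝ) (p η : ℝ) (f : Ed d → ℝ) : Prop :=
  (eLpNorm f (ENNReal.ofReal p) volume).toReal = 1 ∧
  ∀ ρ : ℝ, 0 < ρ → ρ ≤ Rf η →
    (∫ x in {x : Ed d | ρ < |f x|}, |f x| ^ p) ≤ Θ ρ ∧
    (∫ x in {x : Ed d | |f x| < ρ⁻¹}, |f x| ^ p) ≤ Θ ρ

/-- fs is (a.e. version of) the symmetric nonincreasing rearrangement of f:
nonnegative, radial nonincreasing, and equimeasurable with f. -/
def IsRearrangement {d : ℕ} (f fs : Ed d → ℝ) : Prop :=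
  (∀ x, 0 ≤ fs x) ∧ (∀ x y : Ed d, ‖x‖ ≤ ‖y‖ → fs y ≤ fs x) ∧
  (∀ t : ℝ, 0 < t → volume {x : Ed d | t < fs x} = volume {x : Ed d | t < f x})

/-- Precompactness of a sequence of functions in L^p: every subsequence admits a further
subsequence converging in L^p norm. -/
def LpPrecompact {d : ℕ} (p : ℝ) (F : ℕ → Ed d → ℝ) : Prop :=
  ∀ φ : ℕ → ℕ, StrictMono φ → ∃ ψ : ℕ → ℕ, StrictMono ψ ∧ ∃ g : Ed d → ℝ,
    Tendsto (fun n => (eLpNorm (fun x => F (φ (ψ n)) x - g x) (ENNReal.ofReal p) volume).toReal)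
      atTop (nhds 0)

/-
Rearrangement is equimeasurable, so it preserves the `L^p` norm and the `L^p` mass of the
regions where a function is large or small: the rearranged sequences inherit the normalization
and, for large `ν`, their mass neither concentrates at large values nor leaks into small ones.
A radially nonincreasing `u` with `‖u‖_p ≤ C` satisfies `u(x)^p |B(0,|x|)| ≤ C^p`, so the
rearrangements are uniformly bounded away from the origin and uniformly small far from it.
Helly's selection theorem for the radial profiles yields an a.e. convergent subsequence, the two
tail bounds give uniform integrability and uniform tightness, and Vitali's convergence theorem
turns a.e. convergence into convergence in `L^p`.
-/

open scoped ENNReal NNReal Topology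

section Equimeasurable

variable {α : Type*} [MeasurableSpace α] {μ : Measure α} {G H : α → ℝ}

theorem MeasureTheory.MemLp.measure_lt_ne_top {f : α → ℝ} {p : ℝ≥0∞} (hf : MemLp f p μ)
    (hp0 : p ≠ 0) (hp : p ≠ ∞) {t : ℝ} (ht : 0 < t) : μ {x | t < f x} ≠ ∞ :=
  ((measure_mono fun x (hx : t < f x) => show t.toNNReal ≤ ‖f x‖₊ from
    Real.toNNReal_le_iff_le_coe.2 (hx.le.trans (le_abs_self _))).trans_lt
    (hf.meas_ge_lt_top hp0 hp (Real.toNNReal_pos.2 ht).ne')).ne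

theorem map_restrict_Ioi_eq_of_measure_lt_eq (hG : AEMeasurable G μ) (hH : AEMeasurable H μ)
    (heq : ∀ t, 0 < t → μ {x | t < G x} = μ {x | t < H x})
    (hfin : ∀ t, 0 < t → μ {x | t < H x} ≠ ∞) :
    (μ.map G).restrict (Ioi 0) = (μ.map H).restrict (Ioi 0) := by
  have hmap : ∀ F : α → ℝ, AEMeasurable F μ → ∀ t, μ.map F (Ioi t) = μ {x | t < F x} :=
    fun F hF t => Measure.map_apply_of_aemeasurable hF measurableSet_Ioi
  have hIoi : Ioi (0 : ℝ) = ⋃ n : ℕ, Ioi (1 / (n + 1 : ℝ)) := by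
    ext y
    simp only [mem_Ioi, mem_iUnion]
    exact ⟨fun hy => exists_nat_one_div_lt hy, fun ⟨n, hn⟩ => lt_trans (by positivity) hn⟩
  rw [hIoi, Measure.restrict_iUnion_congr]
  intro n
  -- Away from `0` both pushforwards are finite, so they are determined by the masses of the
  -- half-lines `Ioi a`.
  have hc : (0 : ℝ) < 1 / (n + 1) := by positivity
  have hfinG : IsFiniteMeasure ((μ.map G).restrict (Ioi (1 / (n + 1 : ℝ)))) :=
    isFiniteMeasure_restrict.2 (by rw [hmap G hG, heq _ hc]; exact hfin _ hc)
  have hfinH : IsFiniteMeasure ((μ.map H).restrict (Ioi (1 / (n + 1 : ℝ)))) :=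
    isFiniteMeasure_restrict.2 (by rw [hmap H hH]; exact hfin _ hc)
  refine Measure.ext_of_Iic _ _ fun a => ?_
  rw [← compl_Ioi, measure_compl measurableSet_Ioi (measure_ne_top _ _),
    measure_compl measurableSet_Ioi (measure_ne_top _ _)]
  simp only [Measure.restrict_apply_univ, Measure.restrict_apply measurableSet_Ioi,
    Ioi_inter_Ioi, hmap G hG, hmap H hH, heq _ hc, heq _ (lt_sup_of_lt_right hc)]

theorem lintegral_comp_eq_of_measure_lt_eq (hG : AEMeasurable G μ) (hH : AEMeasurable H μ)
    (heq : ∀ t, 0 < t → μ {x | t < G x} = μ {x | t < H x})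
    (hfin : ∀ t, 0 < t → μ {x | t < H x} ≠ ∞) {w : ℝ → ℝ≥0∞} (hw : Measurable w)
    (hw0 : ∀ y ≤ 0, w y = 0) :
    ∫⁻ x, w (G x) ∂μ = ∫⁻ x, w (H x) ∂μ := by
  have hw' : (Ioi 0).indicator w = w :=
    indicator_eq_self.2 fun y hy => lt_of_not_ge fun h => hy (hw0 y h)
  have key : ∀ F : α → ℝ, AEMeasurable F μ →
      ∫⁻ x, w (F x) ∂μ = ∫⁻ y in Ioi 0, w y ∂μ.map F := fun F hF => by
    rw [← lintegral_indicator measurableSet_Ioi, hw', lintegral_map' hw.aemeasurable hF]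
  rw [key G hG, key H hH, map_restrict_Ioi_eq_of_measure_lt_eq hG hH heq hfin]

theorem eLpNorm_restrict_preimage_eq_of_measure_lt_eq (hG : AEMeasurable G μ)
    (hH : AEMeasurable H μ) (hG0 : ∀ x, 0 ≤ G x) (hH0 : ∀ x, 0 ≤ H x)
    (heq : ∀ t, 0 < t → μ {x | t < G x} = μ {x | t < H x})
    (hfin : ∀ t, 0 < t → μ {x | t < H x} ≠ ∞) {S : Set ℝ} (hS : MeasurableSet S)
    {p : ℝ≥0∞} (hp0 : p ≠ 0) (hp : p ≠ ∞) :
    eLpNorm G p (μ.restrict (G ⁻¹' S)) = eLpNorm H p (μ.restrict (H ⁻¹' S)) := by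
  have hp' : 0 < p.toReal := ENNReal.toReal_pos hp0 hp
  set w : ℝ → ℝ≥0∞ := (S ∩ Ioi 0).indicator fun y => ‖y‖ₑ ^ p.toReal
  have key : ∀ F : α → ℝ, AEMeasurable F μ → (∀ x, 0 ≤ F x) →
      ∫⁻ x in F ⁻¹' S, ‖F x‖ₑ ^ p.toReal ∂μ = ∫⁻ x, w (F x) ∂μ := fun F hF hF0 => by
    rw [← lintegral_indicator₀ (hF.nullMeasurableSet_preimage hS)]
    refine lintegral_congr fun x => ?_
    rcases (hF0 x).eq_or_lt with h | h
    · simp [w, ← h, ENNReal.zero_rpow_of_pos hp']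
    · by_cases hx : F x ∈ S <;> simp [w, indicator, hx, h]
  simp only [eLpNorm_eq_lintegral_rpow_enorm_toReal hp0 hp]
  rw [key G hG hG0, key H hH hH0, lintegral_comp_eq_of_measure_lt_eq hG hH heq hfin
    ((measurable_enorm.pow_const _).indicator (hS.inter measurableSet_Ioi))
    fun y hy => indicator_of_notMem (fun h => (not_lt.2 hy) h.2) _]

theorem eLpNorm_restrict_le_of_setIntegral_le {f : α → ℝ} {p : ℝ} (hp : 0 < p)
    (hf : MemLp f (ENNReal.ofReal p) μ) {A : Set α} {ε : ℝ} (hε : 0 ≤ ε)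
    (h : ∫ x in A, |f x| ^ p ∂μ ≤ ε ^ p) :
    eLpNorm f (ENNReal.ofReal p) (μ.restrict A) ≤ ENNReal.ofReal ε := by
  rw [(hf.restrict A).eLpNorm_eq_integral_rpow_norm (by simpa using hp) ENNReal.ofReal_ne_top,
    ENNReal.toReal_ofReal hp.le]
  refine ENNReal.ofReal_le_ofReal ?_
  calc (∫ x in A, ‖f x‖ ^ p ∂μ) ^ p⁻¹ ≤ (ε ^ p) ^ p⁻¹ := by
        simp only [Real.norm_eq_abs]
        exact Real.rpow_le_rpow (integral_nonneg fun x => by positivity) h (by positivity)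
    _ = ε := Real.rpow_rpow_inv hε hp.ne'

end Equimeasurable

section UniformIntegrability

variable {α β : Type*} [MeasurableSpace α] {μ : Measure α} [NormedAddCommGroup β]
  {p : ℝ≥0∞} {f : ℕ → α → β}

theorem unifIntegrable_of_eventually (hp1 : 1 ≤ p) (hp : p ≠ ∞) (hf : ∀ n, MemLp (f n) p μ)
    (h : ∀ ε : ℝ, 0 < ε → ∃ δ : ℝ, 0 < δ ∧ ∀ᶠ n in atTop, ∀ s, MeasurableSet s →
      μ s ≤ ENNReal.ofReal δ → eLpNorm (s.indicator (f n)) p μ ≤ ENNReal.ofReal ε) :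
    UnifIntegrable f p μ := by
  intro ε hε
  obtain ⟨δ₀, hδ₀, hev⟩ := h ε hε
  obtain ⟨N, hN⟩ := eventually_atTop.1 hev
  obtain ⟨δ₁, hδ₁, h₁⟩ :=
    unifIntegrable_finite hp1 hp (f := fun k : Fin N => f k) (fun k => hf k) hε
  refine ⟨min δ₀ δ₁, lt_min hδ₀ hδ₁, fun n s hs hμs => ?_⟩
  rcases lt_or_ge n N with hn | hn
  · exact h₁ ⟨n, hn⟩ s hs (hμs.trans (ENNReal.ofReal_le_ofReal (min_le_right _ _)))
  · exact hN n hn s hs (hμs.trans (ENNReal.ofReal_le_ofReal (min_le_left _ _)))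

theorem unifTight_of_eventually (hp : p ≠ ∞) (hf : ∀ n, MemLp (f n) p μ)
    (h : ∀ ε : ℝ≥0, 0 < ε → ∃ s, μ s ≠ ∞ ∧
      ∀ᶠ n in atTop, eLpNorm (sᶜ.indicator (f n)) p μ ≤ ε) :
    UnifTight f p μ := by
  intro ε hε
  obtain ⟨s₀, hs₀, hev⟩ := h ε hε
  obtain ⟨N, hN⟩ := eventually_atTop.1 hev
  obtain ⟨s₁, hs₁, h₁⟩ := unifTight_finite hp (f := fun k : Fin N => f k) (fun k => hf k) hε
  refine ⟨s₀ ∪ s₁, measure_union_ne_top hs₀ hs₁, fun n => ?_⟩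
  have hsub : ∀ t, t ⊆ s₀ ∪ s₁ → eLpNorm ((s₀ ∪ s₁)ᶜ.indicator (f n)) p μ
      ≤ eLpNorm (tᶜ.indicator (f n)) p μ := fun t ht =>
    eLpNorm_mono fun x => norm_indicator_le_of_subset (compl_subset_compl.2 ht) _ _
  rcases lt_or_ge n N with hn | hn
  · exact (hsub s₁ subset_union_right).trans (h₁ ⟨n, hn⟩)
  · exact (hsub s₀ subset_union_left).trans (hN n hn)

theorem unifIntegrable_of_eventually_superlevel {u : ℕ → α → ℝ} (hp1 : 1 ≤ p) (hp : p ≠ ∞)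
    (hu : ∀ n, MemLp (u n) p μ) (hmeas : ∀ n, Measurable (u n)) (hnn : ∀ n x, 0 ≤ u n x)
    (h : ∀ ε : ℝ, 0 < ε → ∃ ρ : ℝ, ∀ᶠ n in atTop,
      eLpNorm (u n) p (μ.restrict {x | ρ < u n x}) ≤ ENNReal.ofReal ε) :
    UnifIntegrable u p μ := by
  refine unifIntegrable_of_eventually hp1 hp hu fun ε hε => ?_
  obtain ⟨ρ, hρ⟩ := h (ε / 2) (half_pos hε)
  obtain ⟨δ, hδ, hbound⟩ := eLpNorm_indicator_le_of_bound (μ := μ) (f := fun _ : α => |ρ|) hp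
    (half_pos hε) (M := |ρ| + 1) fun _ => by simp
  refine ⟨δ, hδ, hρ.mono fun n hn s hs hμs => ?_⟩
  have hsup : MeasurableSet {x | ρ < u n x} := measurableSet_lt measurable_const (hmeas n)
  have hpt : ∀ x, ‖s.indicator (u n) x‖
      ≤ ‖({x | ρ < u n x}.indicator (u n) + s.indicator fun _ => |ρ|) x‖ := fun x => by
    have h0 := hnn n x
    have hsum := add_nonneg h0 (abs_nonneg ρ)
    by_cases hx : x ∈ s
    · by_cases hρx : ρ < u n x
      · simp [hx, hρx, abs_of_nonneg h0, abs_of_nonneg hsum]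
      · simp [hx, hρx, abs_of_nonneg h0, (not_lt.1 hρx).trans (le_abs_self ρ)]
    · simp [hx, abs_nonneg]
  calc eLpNorm (s.indicator (u n)) p μ
      ≤ eLpNorm ({x | ρ < u n x}.indicator (u n) + s.indicator fun _ => |ρ|) p μ :=
        eLpNorm_mono hpt
    _ ≤ eLpNorm ({x | ρ < u n x}.indicator (u n)) p μ
          + eLpNorm (s.indicator fun _ => |ρ|) p μ :=
        eLpNorm_add_le ((hmeas n).indicator hsup).aestronglyMeasurable
          (measurable_const.indicator hs).aestronglyMeasurable hp1
    _ ≤ ENNReal.ofReal (ε / 2) + ENNReal.ofReal (ε / 2) := by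
        rw [eLpNorm_indicator_eq_eLpNorm_restrict hsup]
        exact add_le_add hn (hbound s hs hμs)
    _ = ENNReal.ofReal ε := by
        rw [← ENNReal.ofReal_add (half_pos hε).le (half_pos hε).le, add_halves]

end UniformIntegrability

section Helly

theorem tendsto_of_antitone_of_continuousAt {F : ℕ → ℝ → ℝ} (hF : ∀ n, Antitone (F n))
    {L : ℚ → ℝ} (hL : ∀ q : ℚ, Tendsto (fun n => F n q) atTop (𝓝 (L q))) {Φ : ℝ → ℝ}
    (hLΦ : ∀ (q : ℚ) (s : ℝ), s < q → L q ≤ Φ s) (hΦL : ∀ q : ℚ, Φ q ≤ L q) {s : ℝ}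
    (hs : ContinuousAt Φ s) : Tendsto (fun n => F n s) atTop (𝓝 (Φ s)) := by
  rw [tendsto_order]
  constructor
  · intro a ha
    obtain ⟨δ, hδ, hΦ⟩ := Metric.eventually_nhds_iff.1 (hs.eventually (lt_mem_nhds ha))
    obtain ⟨q, hsq, hqδ⟩ := exists_rat_btwn (lt_add_of_pos_right s hδ)
    have haq : a < L q :=
      (hΦ (by rw [Real.dist_eq, abs_lt]; constructor <;> linarith)).trans_le (hΦL q)
    filter_upwards [(hL q).eventually (lt_mem_nhds haq)] with n hn
    exact hn.trans_le (hF n hsq.le)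
  · intro b hb
    obtain ⟨δ, hδ, hΦ⟩ := Metric.eventually_nhds_iff.1 (hs.eventually (gt_mem_nhds hb))
    obtain ⟨t, hδt, hts⟩ := exists_between (sub_lt_self s hδ)
    obtain ⟨q, htq, hqs⟩ := exists_rat_btwn hts
    have hqb : L q < b :=
      (hLΦ q t htq).trans_lt (hΦ (by rw [Real.dist_eq, abs_lt]; constructor <;> linarith))
    filter_upwards [(hL q).eventually (gt_mem_nhds hqb)] with n hn
    exact (hF n hqs.le).trans_lt hn

/-- Helly's selection theorem for antitone functions. -/
theorem exists_subseq_tendsto_of_antitone {F : ℕ → ℝ → ℝ} (hF : ∀ n, Antitone (F n))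
    (hbdd : ∀ s, ∃ C, ∀ n, |F n s| ≤ C) :
    ∃ ψ : ℕ → ℕ, StrictMono ψ ∧
      {s | ¬∃ l, Tendsto (fun n => F (ψ n) s) atTop (𝓝 l)}.Countable := by
  choose C hC using hbdd
  obtain ⟨L, -, ψ, hψ, hlim⟩ := (isCompact_univ_pi fun q : ℚ => isCompact_Icc
    (a := -C q) (b := C q)).tendsto_subseq (x := fun n (q : ℚ) => F n q)
    fun n q _ => abs_le.1 (hC q n)
  have hL : ∀ q : ℚ, Tendsto (fun n => F (ψ n) q) atTop (𝓝 (L q)) := tendsto_pi_nhds.1 hlim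
  have hLanti : ∀ q₁ q₂ : ℚ, q₁ ≤ q₂ → L q₂ ≤ L q₁ := fun q₁ q₂ h =>
    le_of_tendsto_of_tendsto' (hL q₂) (hL q₁) fun n => hF _ (by exact_mod_cast h)
  have hne : ∀ s : ℝ, Nonempty {q : ℚ // s < q} := fun s =>
    let ⟨q, hq⟩ := exists_rat_gt s; ⟨⟨q, hq⟩⟩
  have hbddL : ∀ s : ℝ, BddAbove (range fun q : {q : ℚ // s < q} => L q) := fun s => by
    obtain ⟨q₀, hq₀⟩ := exists_rat_lt s
    exact ⟨L q₀, forall_mem_range.2 fun q => hLanti _ _ (by exact_mod_cast (hq₀.trans q.2).le)⟩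
  set Φ : ℝ → ℝ := fun s => ⨆ q : {q : ℚ // s < q}, L q
  have hLΦ : ∀ (q : ℚ) (s : ℝ), s < q → L q ≤ Φ s := fun q s h => le_ciSup (hbddL s) ⟨q, h⟩
  have hΦL : ∀ q : ℚ, Φ q ≤ L q := fun q =>
    haveI := hne q; ciSup_le fun q' => hLanti _ _ (by exact_mod_cast q'.2.le)
  have hΦ : Antitone Φ := fun s₁ s₂ h =>
    haveI := hne s₂; ciSup_le fun q => hLΦ q s₁ (h.trans_lt q.2)
  refine ⟨ψ, hψ, hΦ.countable_not_continuousAt.mono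
    fun s (hs : ¬_) (hcont : ContinuousAt Φ s) => hs ?_⟩
  exact ⟨Φ s, tendsto_of_antitone_of_continuousAt (fun n => hF (ψ n)) hL hLΦ hΦL hcont⟩

end Helly

section Radial

variable {E : Type*} [NormedAddCommGroup E] [NormedSpace ℝ E]

def RadiallyAntitone (u : E → ℝ) : Prop :=
  ∀ x y : E, ‖x‖ ≤ ‖y‖ → u y ≤ u x

namespace RadiallyAntitone

variable {u : E → ℝ}

theorem exists_antitone_comp_norm [Nontrivial E] (hu : RadiallyAntitone u) :
    ∃ G : ℝ → ℝ, Antitone G ∧ ∀ x, u x = G ‖x‖ := by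
  obtain ⟨e, he⟩ := exists_norm_eq E zero_le_one
  have hnorm : ∀ t : ℝ, ‖max t 0 • e‖ = max t 0 := fun t => by
    rw [norm_smul, he, mul_one, Real.norm_of_nonneg (le_max_right t 0)]
  refine ⟨fun t => u (max t 0 • e), fun s t hst => hu _ _ ?_, fun x => ?_⟩
  · rw [hnorm, hnorm]
    exact max_le_max hst le_rfl
  · have h : ‖max ‖x‖ 0 • e‖ = ‖x‖ := by rw [hnorm, max_eq_left (norm_nonneg x)]
    exact le_antisymm (hu _ _ h.le) (hu _ _ h.ge)

variable [MeasurableSpace E] [BorelSpace E]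

theorem measurable [Nontrivial E] (hu : RadiallyAntitone u) : Measurable u := by
  obtain ⟨G, hG, hu⟩ := hu.exists_antitone_comp_norm
  rw [funext hu]
  exact hG.measurable.comp measurable_norm

theorem le_of_eLpNorm_le [Nontrivial E] {μ : Measure E} {p C : ℝ≥0∞} (hu : RadiallyAntitone u)
    (hnn : ∀ x, 0 ≤ u x) (hp0 : p ≠ 0) (hp : p ≠ ∞) (hC : eLpNorm u p μ ≤ C) {x : E} {c : ℝ}
    (h : C ^ p.toReal < ENNReal.ofReal c ^ p.toReal * μ (closedBall 0 ‖x‖)) : u x ≤ c := by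
  by_contra! hcx
  have hball : closedBall 0 ‖x‖ ⊆ {y | ENNReal.ofReal c ≤ ‖u y‖ₑ} := fun y hy => by
    rw [mem_closedBall_zero_iff] at hy
    show _ ≤ ‖u y‖ₑ
    rw [Real.enorm_of_nonneg (hnn y)]
    exact ENNReal.ofReal_le_ofReal (hcx.le.trans (hu y x hy))
  have := (mul_le_mul_right (measure_mono hball) _).trans
    (mul_meas_ge_le_pow_eLpNorm' μ hp0 hp hu.measurable.aestronglyMeasurable _)
  exact (h.trans_le this).not_ge (ENNReal.rpow_le_rpow hC ENNReal.toReal_nonneg)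

end RadiallyAntitone

end Radial

section AddHaar

variable {E : Type*} [NormedAddCommGroup E] [NormedSpace ℝ E] [FiniteDimensional ℝ E]
  [Nontrivial E] [MeasurableSpace E] [BorelSpace E] (μ : Measure E) [μ.IsAddHaarMeasure]
  {p C : ℝ≥0∞}

theorem tendsto_addHaar_closedBall_atTop :
    Tendsto (fun R : ℝ => μ (closedBall 0 R)) atTop (𝓝 ∞) := by
  have h : Tendsto (fun R : ℝ => ENNReal.ofReal (R ^ Module.finrank ℝ E) * μ (closedBall 0 1))
      atTop (𝓝 ∞) := by
    rw [← ENNReal.top_mul (measure_closedBall_pos μ 0 one_pos).ne']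
    exact ENNReal.Tendsto.mul_const (ENNReal.tendsto_ofReal_atTop.comp
      (tendsto_pow_atTop Module.finrank_pos.ne')) (Or.inr measure_closedBall_lt_top.ne)
  refine h.congr' ?_
  filter_upwards [eventually_ge_atTop 0] with R hR
  rw [Measure.addHaar_closedBall' μ 0 hR]

namespace RadiallyAntitone

theorem exists_bound_of_pos_radius (hp0 : p ≠ 0) (hp : p ≠ ∞) (hC : C ≠ ∞) {r : ℝ}
    (hr : 0 < r) : ∃ c : ℝ, ∀ u : E → ℝ, RadiallyAntitone u → (∀ x, 0 ≤ u x) →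
      eLpNorm u p μ ≤ C → ∀ x, r ≤ ‖x‖ → u x ≤ c := by
  have hp' : 0 < p.toReal := ENNReal.toReal_pos hp0 hp
  have h : Tendsto (fun c : ℝ => ENNReal.ofReal c ^ p.toReal * μ (closedBall 0 r)) atTop
      (𝓝 ∞) := by
    rw [← ENNReal.top_mul (measure_closedBall_pos μ 0 hr).ne']
    exact ENNReal.Tendsto.mul_const ((ENNReal.tendsto_rpow_at_top hp').comp
      ENNReal.tendsto_ofReal_atTop) (Or.inr measure_closedBall_lt_top.ne)
  obtain ⟨c, hc⟩ :=
    (h.eventually (lt_mem_nhds (ENNReal.rpow_lt_top_of_nonneg hp'.le hC))).exists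
  exact ⟨c, fun u hu hnn hbdd x hx => hu.le_of_eLpNorm_le hnn hp0 hp hbdd
    (hc.trans_le (mul_le_mul_right (measure_mono (closedBall_subset_closedBall hx)) _))⟩

theorem exists_radius_of_pos_bound (hp0 : p ≠ 0) (hp : p ≠ ∞) (hC : C ≠ ∞) {c : ℝ}
    (hc : 0 < c) : ∃ R : ℝ, ∀ u : E → ℝ, RadiallyAntitone u → (∀ x, 0 ≤ u x) →
      eLpNorm u p μ ≤ C → ∀ x, R ≤ ‖x‖ → u x ≤ c := by
  have hp' : 0 < p.toReal := ENNReal.toReal_pos hp0 hp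
  have h : Tendsto (fun R : ℝ => ENNReal.ofReal c ^ p.toReal * μ (closedBall 0 R)) atTop
      (𝓝 ∞) := by
    rw [← ENNReal.mul_top (ENNReal.rpow_pos (ENNReal.ofReal_pos.2 hc) ENNReal.ofReal_ne_top).ne']
    exact ENNReal.Tendsto.const_mul (tendsto_addHaar_closedBall_atTop μ)
      (Or.inr (ENNReal.rpow_lt_top_of_nonneg hp'.le ENNReal.ofReal_ne_top).ne)
  obtain ⟨R, hR⟩ :=
    (h.eventually (lt_mem_nhds (ENNReal.rpow_lt_top_of_nonneg hp'.le hC))).exists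
  exact ⟨R, fun u hu hnn hbdd x hx => hu.le_of_eLpNorm_le hnn hp0 hp hbdd
    (hR.trans_le (mul_le_mul_right (measure_mono (closedBall_subset_closedBall hx)) _))⟩

theorem exists_subseq_ae_tendsto {u : ℕ → E → ℝ} (hu : ∀ n, RadiallyAntitone (u n))
    (hbdd : ∀ x : E, x ≠ 0 → ∃ C, ∀ n, |u n x| ≤ C) :
    ∃ ψ : ℕ → ℕ, StrictMono ψ ∧ ∀ᵐ x ∂μ, ∃ l, Tendsto (fun n => u (ψ n) x) atTop (𝓝 l) := by
  choose G hG hGu using fun n => (hu n).exists_antitone_comp_norm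
  have hFbdd : ∀ s, ∃ C, ∀ n, |G n (Real.exp s)| ≤ C := fun s => by
    obtain ⟨x, hx⟩ := exists_norm_eq E (Real.exp_pos s).le
    obtain ⟨C, hC⟩ := hbdd x (norm_pos_iff.1 (hx ▸ Real.exp_pos s))
    exact ⟨C, fun n => hx ▸ hGu n x ▸ hC n⟩
  obtain ⟨ψ, hψ, hD⟩ := exists_subseq_tendsto_of_antitone
    (fun n => (hG n).comp_monotone Real.exp_monotone) hFbdd
  refine ⟨ψ, hψ, measure_mono_null (fun x hx => ?_) (measure_union_null (measure_singleton 0)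
    ((measure_biUnion_null_iff hD).2 fun s _ => Measure.addHaar_sphere μ 0 (Real.exp s)))⟩
  by_cases hx0 : x = 0
  · exact Or.inl hx0
  · have hexp : Real.exp (Real.log ‖x‖) = ‖x‖ := Real.exp_log (norm_pos_iff.2 hx0)
    refine Or.inr (mem_biUnion (x := Real.log ‖x‖) ?_ (by simp [hexp]))
    simpa [hexp, hGu] using hx

theorem exists_subseq_tendsto_eLpNorm (hp1 : 1 ≤ p) (hp : p ≠ ∞) (hC : C ≠ ∞)
    {u : ℕ → E → ℝ} (hu : ∀ n, RadiallyAntitone (u n)) (hnn : ∀ n x, 0 ≤ u n x)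
    (hbdd : ∀ n, eLpNorm (u n) p μ ≤ C)
    (hupper : ∀ ε : ℝ, 0 < ε → ∃ ρ : ℝ, ∀ᶠ n in atTop,
      eLpNorm (u n) p (μ.restrict {x | ρ < u n x}) ≤ ENNReal.ofReal ε)
    (hlower : ∀ ε : ℝ, 0 < ε → ∃ c : ℝ, 0 < c ∧ ∀ᶠ n in atTop,
      eLpNorm (u n) p (μ.restrict {x | u n x < c}) ≤ ENNReal.ofReal ε) :
    ∃ ψ : ℕ → ℕ, StrictMono ψ ∧ ∃ g : E → ℝ,
      Tendsto (fun n => eLpNorm (u (ψ n) - g) p μ) atTop (𝓝 0) := by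
  have hp0 : p ≠ 0 := (zero_lt_one.trans_le hp1).ne'
  have hmeas : ∀ n, Measurable (u n) := fun n => (hu n).measurable
  have hmem : ∀ n, MemLp (u n) p μ := fun n =>
    ⟨(hmeas n).aestronglyMeasurable, (hbdd n).trans_lt hC.lt_top⟩
  obtain ⟨ψ, hψ, hae⟩ := exists_subseq_ae_tendsto μ hu fun x hx => by
    obtain ⟨c, hc⟩ := exists_bound_of_pos_radius μ hp0 hp hC (norm_pos_iff.2 hx)
    exact ⟨c, fun n => (abs_of_nonneg (hnn n x)).trans_le
      (hc _ (hu n) (hnn n) (hbdd n) x le_rfl)⟩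
  set g : E → ℝ := fun x => limUnder atTop fun n => u (ψ n) x
  have hg : ∀ᵐ x ∂μ, Tendsto (fun n => u (ψ n) x) atTop (𝓝 (g x)) :=
    hae.mono fun x hx => tendsto_nhds_limUnder hx
  have hgmem : MemLp g p μ :=
    ⟨aestronglyMeasurable_of_tendsto_ae atTop (fun n => (hmem (ψ n)).1) hg,
      ((Lp.eLpNorm_lim_le_liminf_eLpNorm (fun n => (hmem (ψ n)).1) g hg).trans
        (liminf_le_of_frequently_le' (Frequently.of_forall fun n => hbdd (ψ n)))).trans_lt
        hC.lt_top⟩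
  refine ⟨ψ, hψ, g, tendsto_Lp_of_tendsto_ae hp1 hp (fun n => (hmem (ψ n)).1) hgmem ?_ ?_ hg⟩
  · refine unifIntegrable_of_eventually_superlevel hp1 hp (fun n => hmem (ψ n))
      (fun n => hmeas (ψ n)) (fun n => hnn (ψ n)) fun ε hε => ?_
    obtain ⟨ρ, hρ⟩ := hupper ε hε
    exact ⟨ρ, hψ.tendsto_atTop.eventually hρ⟩
  · refine unifTight_of_eventually hp (fun n => hmem (ψ n)) fun ε hε => ?_
    obtain ⟨c, hc, hev⟩ := hlower ε hε
    obtain ⟨R, hR⟩ := exists_radius_of_pos_bound μ hp0 hp hC (half_pos hc)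
    refine ⟨closedBall 0 R, measure_closedBall_lt_top.ne,
      (hψ.tendsto_atTop.eventually hev).mono fun n hn => ?_⟩
    have hsub : (closedBall (0 : E) R)ᶜ ⊆ {x | u (ψ n) x < c} := fun x hx =>
      (hR _ (hu _) (hnn _) (hbdd _) x (le_of_lt (by simpa using hx))).trans_lt (half_lt_self hc)
    calc eLpNorm ((closedBall (0 : E) R)ᶜ.indicator (u (ψ n))) p μ
        ≤ eLpNorm ({x | u (ψ n) x < c}.indicator (u (ψ n))) p μ :=
          eLpNorm_mono fun x => norm_indicator_le_of_subset hsub _ _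
      _ = eLpNorm (u (ψ n)) p (μ.restrict {x | u (ψ n) x < c}) :=
          eLpNorm_indicator_eq_eLpNorm_restrict (measurableSet_lt (hmeas _) measurable_const)
      _ ≤ ε := by simpa using hn

end RadiallyAntitone

end AddHaar

section Euclidean

variable {d : ℕ}

theorem IsRearrangement.eLpNorm_restrict_preimage_eq (hd : 1 ≤ d) {f fs : Ed d → ℝ}
    (h : IsRearrangement f fs) {p : ℝ≥0∞} (hp0 : p ≠ 0) (hp : p ≠ ∞)
    (hf : MemLp f p volume) (hf0 : ∀ x, 0 ≤ f x) {S : Set ℝ} (hS : MeasurableSet S) :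
    eLpNorm fs p (volume.restrict (fs ⁻¹' S)) = eLpNorm f p (volume.restrict (f ⁻¹' S)) :=
  have : Nonempty (Fin d) := ⟨⟨0, hd⟩⟩
  eLpNorm_restrict_preimage_eq_of_measure_lt_eq
    (RadiallyAntitone.measurable h.2.1).aemeasurable hf.1.aemeasurable h.1 hf0 h.2.2
    (fun _ => hf.measure_lt_ne_top hp0 hp) hS hp0 hp

theorem IsNormalized.eLpNorm_restrict_le {Θ Rf : ℝ → ℝ} {p η : ℝ} {f : Ed d → ℝ}
    (h : IsNormalized Θ Rf p η f) (hp : 0 < p) (hf : MemLp f (ENNReal.ofReal p) volume)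
    (hf0 : ∀ x, 0 ≤ f x) {ρ ε : ℝ} (hρ : 0 < ρ) (hρη : ρ ≤ Rf η) (hε : 0 ≤ ε)
    (hΘ : Θ ρ ≤ ε ^ p) :
    eLpNorm f (ENNReal.ofReal p) (volume.restrict {x | ρ < f x}) ≤ ENNReal.ofReal ε ∧
      eLpNorm f (ENNReal.ofReal p) (volume.restrict {x | f x < ρ⁻¹}) ≤ ENNReal.ofReal ε := by
  have habs : ∀ x, |f x| = f x := fun x => abs_of_nonneg (hf0 x)
  obtain ⟨hupper, hlower⟩ := h.2 ρ hρ hρη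
  simp only [habs] at hupper hlower
  exact ⟨eLpNorm_restrict_le_of_setIntegral_le hp hf hε
      (by simpa only [habs] using hupper.trans hΘ),
    eLpNorm_restrict_le_of_setIntegral_le hp hf hε (by simpa only [habs] using hlower.trans hΘ)⟩

theorem lpPrecompact_of_isNormalized (hd : 1 ≤ d) {p : ℝ} (hp : 1 < p) {Θ Rf : ℝ → ℝ}
    {η : ℕ → ℝ} (hΘ : Tendsto Θ atTop (𝓝 0)) (hRη : Tendsto (fun ν => Rf (η ν)) atTop atTop)
    {f fs : ℕ → Ed d → ℝ} (hf : ∀ ν, MemLp (f ν) (ENNReal.ofReal p) volume)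
    (hf0 : ∀ ν x, 0 ≤ f ν x) (hnormalized : ∀ ν, IsNormalized Θ Rf p (η ν) (f ν))
    (hfs : ∀ ν, IsRearrangement (f ν) (fs ν)) :
    LpPrecompact p fs := by
  have : Nonempty (Fin d) := ⟨⟨0, hd⟩⟩
  have hp1 : 1 ≤ ENNReal.ofReal p := by simpa using ENNReal.ofReal_le_ofReal hp.le
  have hp0 : ENNReal.ofReal p ≠ 0 := (zero_lt_one.trans_le hp1).ne'
  have htransfer : ∀ ν {S : Set ℝ}, MeasurableSet S →
      eLpNorm (fs ν) (ENNReal.ofReal p) (volume.restrict (fs ν ⁻¹' S))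
        = eLpNorm (f ν) (ENNReal.ofReal p) (volume.restrict (f ν ⁻¹' S)) := fun ν =>
    (hfs ν).eLpNorm_restrict_preimage_eq hd hp0 ENNReal.ofReal_ne_top (hf ν) (hf0 ν)
  have hnorm : ∀ ν, eLpNorm (fs ν) (ENNReal.ofReal p) volume = 1 := fun ν => by
    have h := htransfer ν MeasurableSet.univ
    rw [preimage_univ, preimage_univ, Measure.restrict_univ] at h
    exact h.trans ((ENNReal.toReal_eq_one_iff _).1 (hnormalized ν).1)
  have htail : ∀ ε : ℝ, 0 < ε → ∃ ρ : ℝ, 0 < ρ ∧ ∀ᶠ ν in atTop,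
      eLpNorm (f ν) (ENNReal.ofReal p) (volume.restrict {x | ρ < f ν x}) ≤ ENNReal.ofReal ε ∧
      eLpNorm (f ν) (ENNReal.ofReal p) (volume.restrict {x | f ν x < ρ⁻¹})
        ≤ ENNReal.ofReal ε := fun ε hε => by
    obtain ⟨ρ, hΘρ, hρ⟩ := ((hΘ.eventually (gt_mem_nhds (Real.rpow_pos_of_pos hε p))).and
      (eventually_ge_atTop 1)).exists
    refine ⟨ρ, zero_lt_one.trans_le hρ, ?_⟩
    filter_upwards [hRη.eventually_ge_atTop ρ] with ν hν
    exact (hnormalized ν).eLpNorm_restrict_le (zero_lt_one.trans hp) (hf ν) (hf0 ν)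
      (zero_lt_one.trans_le hρ) hν hε.le hΘρ.le
  intro φ hφ
  obtain ⟨ψ, hψ, g, hg⟩ := RadiallyAntitone.exists_subseq_tendsto_eLpNorm volume hp1
    ENNReal.ofReal_ne_top ENNReal.one_ne_top (u := fun n => fs (φ n)) (fun n => (hfs _).2.1)
    (fun n => (hfs _).1) (fun n => (hnorm _).le)
    (fun ε hε => let ⟨ρ, _, hev⟩ := htail ε hε
      ⟨ρ, hφ.tendsto_atTop.eventually
        (hev.mono fun ν h => (htransfer ν measurableSet_Ioi).trans_le h.1)⟩)
    (fun ε hε => let ⟨ρ, hρ, hev⟩ := htail ε hε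
      ⟨ρ⁻¹, inv_pos.2 hρ, hφ.tendsto_atTop.eventually
        (hev.mono fun ν h => (htransfer ν measurableSet_Iio).trans_le h.2)⟩)
  have hg' := (ENNReal.tendsto_toReal ENNReal.zero_ne_top).comp hg
  rw [ENNReal.toReal_zero] at hg'
  exact ⟨ψ, hψ, g, hg'⟩

end Euclidean

theorem rearranged_extremizing_sequence_precompact_general
    (p q r : ℝ) (hp : 1 < p) (hq : 1 < q) (hr : 1 < r)
    (d : ℕ) (hd : 1 ≤ d)
    (f g h fs gs hs : ℕ → Ed d → ℝ)
    (hfmem : ∀ ν, MemLp (f ν) (ENNReal.ofReal p) volume)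
    (hgmem : ∀ ν, MemLp (g ν) (ENNReal.ofReal q) volume)
    (hhmem : ∀ ν, MemLp (h ν) (ENNReal.ofReal r) volume)
    (hfpos : ∀ ν x, 0 ≤ f ν x) (hgpos : ∀ ν x, 0 ≤ g ν x) (hhpos : ∀ ν x, 0 ≤ h ν x)
    -- the sequence is normalized:
    (hnormalized : ∃ Θ Rf : ℝ → ℝ, ∃ η : ℕ → ℝ,
      Tendsto Θ atTop (nhds 0) ∧ Tendsto Rf (nhdsWithin 0 (Ioi 0)) atTop ∧
      (∀ ν, 0 < η ν) ∧ Tendsto η atTop (nhds 0) ∧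
      ∀ ν, IsNormalized Θ Rf p (η ν) (f ν) ∧ IsNormalized Θ Rf q (η ν) (g ν) ∧
        IsNormalized Θ Rf r (η ν) (h ν))
    -- fs, gs, hs are the symmetric nonincreasing rearrangements:
    (hfs : ∀ ν, IsRearrangement (f ν) (fs ν)) (hgs : ∀ ν, IsRearrangement (g ν) (gs ν))
    (hhs : ∀ ν, IsRearrangement (h ν) (hs ν)) :
    LpPrecompact p fs ∧ LpPrecompact q gs ∧ LpPrecompact r hs := by
  obtain ⟨Θ, Rf, η, hΘ, hRf, hηpos, hη, hnormd⟩ := hnormalized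
  have hRη : Tendsto (fun ν => Rf (η ν)) atTop atTop :=
    hRf.comp (tendsto_nhdsWithin_iff.2 ⟨hη, Eventually.of_forall hηpos⟩)
  exact ⟨lpPrecompact_of_isNormalized hd hp hΘ hRη hfmem hfpos (fun ν => (hnormd ν).1) hfs,
    lpPrecompact_of_isNormalized hd hq hΘ hRη hgmem hgpos (fun ν => (hnormd ν).2.1) hgs,
    lpPrecompact_of_isNormalized hd hr hΘ hRη hhmem hhpos (fun ν => (hnormd ν).2.2) hhs⟩

theorem rearranged_extremizing_sequence_precompact
    (p q r : ℝ) (hp : 1 < p) (hq : 1 < q) (hr : 1 < r) (hpqr : 1/p + 1/q + 1/r = 2)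
    (d : ℕ) (hd : 1 ≤ d) (γ Γ : ℝ) (hγ : 0 < γ) (hγΓ : γ ≤ Γ)
    (f g h fs gs hs : ℕ → Ed d → ℝ)
    (hfmem : ∀ ν, MemLp (f ν) (ENNReal.ofReal p) volume)
    (hgmem : ∀ ν, MemLp (g ν) (ENNReal.ofReal q) volume)
    (hhmem : ∀ ν, MemLp (h ν) (ENNReal.ofReal r) volume)
    (hfpos : ∀ ν x, 0 ≤ f ν x) (hgpos : ∀ ν x, 0 ≤ g ν x) (hhpos : ∀ ν x, 0 ≤ h ν x)
    (hfnorm : ∀ ν, nrm p (f ν) = 1) (hgnorm : ∀ ν, nrm q (g ν) = 1)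
    (hhnorm : ∀ ν, nrm r (h ν) = 1)
    -- the sequence is extremizing:
    (hextr : Tendsto (fun ν => pairing (conv (f ν) (g ν)) (h ν)) atTop
      (nhds (Apqr p q r ^ d)))
    -- the sequence is normalized:
    (hnormalized : ∃ Θ Rf : ℝ → ℝ, ∃ η : ℕ → ℝ,
      Tendsto Θ atTop (nhds 0) ∧ Tendsto Rf (nhdsWithin 0 (Ioi 0)) atTop ∧
      (∀ ν, 0 < η ν) ∧ Tendsto η atTop (nhds 0) ∧
      ∀ ν, IsNormalized Θ Rf p (η ν) (f ν) ∧ IsNormalized Θ Rf q (η ν) (g ν) ∧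
        IsNormalized Θ Rf r (η ν) (h ν))
    -- fs, gs, hs are the symmetric nonincreasing rearrangements:
    (hfs : ∀ ν, IsRearrangement (f ν) (fs ν)) (hgs : ∀ ν, IsRearrangement (g ν) (gs ν))
    (hhs : ∀ ν, IsRearrangement (h ν) (hs ν))
    -- the rearrangements take values in [γ,Γ] on the unit sphere:
    (hfsph : ∀ ν, ∀ x : Ed d, ‖x‖ = 1 → fs ν x ∈ Icc γ Γ)
    (hgsph : ∀ ν, ∀ x : Ed d, ‖x‖ = 1 → gs ν x ∈ Icc γ Γ)
    (hhsph : ∀ ν, ∀ x : Ed d, ‖x‖ = 1 → hs ν x ∈ Icc γ Γ) :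
    LpPrecompact p fs ∧ LpPrecompact q gs ∧ LpPrecompact r hs :=
  rearranged_extremizing_sequence_precompact_general p q r hp hq hr d hd f g h fs gs hs hfmem hgmem
    hhmem hfpos hgpos hhpos hnormalized hfs hgs hhs
end
end
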